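/- Let 0 < α ≤ 1, let Ā : 𝓑 → ℝ be α-Hölder and normalized, and let m be the unique Borel probability measure fixed by L_Ā^*. Then L_Ā has a spectral gap on the Hölder space: there exist constants C > 0 and r ∈ (0,1) such that for every α-Hölder function w : 𝓑 → ℝ with ∫ w dm = 0 and every n ≥ 1, ‖L_Ā^n(w)‖_α ≤ C·r^n·‖w‖_α, where ‖w‖_α = ‖w‖_∞ + sup_{x≠y} |w(x) − w(y)|/d(x,y)^α. -/

import Mathlib

/-!
Coupling argument. For `d = d(x, y)` and `θ = 2^{-α}`, the Hölder bound on `A` shows that each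
of the densities `a ↦ e^{A(ax)}`, `a ↦ e^{A(ay)}` dominates `e^{-Hθd^α}` times the other, so this
much mass can be coupled, and the uncoupled mass only sees the oscillation of `w`. Iterating gives
`|Lⁿw(x) - Lⁿw(y)| ≤ θⁿ |w|_α d^α + (1 - e^{-B d^α}) osc w` with `B = Hθ/(1 - θ)`. Thus the Hölder
seminorm of `Lⁿw` decays up to a multiple of `osc w`, while the oscillation contracts by a fixed
factor up to a multiple of `θⁿ |w|_α`, so a weighted sum `osc + β |·|_α` contracts geometrically
along blocks of `n₀` iterates. Finally, `∫ Lⁿw dm = ∫ w dm = 0` since `m` is `L^*`-invariant, and a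
function of mean zero has sup norm at most its oscillation.
-/

open MeasureTheory Filter Topology

noncomputable section

instance : Fact (0 < 2 * Real.pi) := ⟨by positivity⟩

/-- The circle `M = ℝ/2πℤ` with arc-length metric. -/
abbrev Circ : Type := AddCircle (2 * Real.pi)

/-- The normalized Haar (Lebesgue) probability measure on the circle. -/
def haarC : Measure Circ := AddCircle.haarAddCircle

/-- The Bernoulli space `𝓑 = M^ℕ`. -/
abbrev Bs : Type := ℕ → Circ

/-- The left shift `σ`. -/
def shift (x : Bs) : Bs := fun n => x (n + 1)

/-- Prepending a symbol: `cons a x = ax = (a, x₀, x₁, …)`. -/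
def cons (a : Circ) (x : Bs) : Bs := fun n =>
  match n with
  | 0 => a
  | k + 1 => x k

/-- The metric `d(x,y) = Σ_k 2^{-k} d_M(x_k, y_k)` on `𝓑`. -/
def dB (x y : Bs) : ℝ := ∑' k : ℕ, (1 / 2 : ℝ) ^ k * dist (x k) (y k)

/-- `A` is α-Hölder with constant `H` for the metric `dB`. -/
def IsHolderB (α H : ℝ) (A : Bs → ℝ) : Prop := ∀ x y, |A x - A y| ≤ H * dB x y ^ α

/-- The Ruelle operator `L_A ψ (x) = ∫_M e^{A(ax)} ψ(ax) da`. -/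
def Ruelle (A : Bs → ℝ) (ψ : Bs → ℝ) : Bs → ℝ :=
  fun x => ∫ a, Real.exp (A (cons a x)) * ψ (cons a x) ∂haarC

/-- `A` is normalized: `∫_M e^{A(ax)} da = 1` for all `x`. -/
def NormalizedB (A : Bs → ℝ) : Prop := ∀ x, ∫ a, Real.exp (A (cons a x)) ∂haarC = 1

/-- `m` is a fixed point of the dual Ruelle operator `L_A^*`. -/
def FixedDual (A : Bs → ℝ) (m : Measure Bs) : Prop :=
  ∀ ψ : Bs → ℝ, Continuous ψ → (∃ C, ∀ x, |ψ x| ≤ C) →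
    ∫ x, Ruelle A ψ x ∂m = ∫ x, ψ x ∂m

/-- The supremum norm. -/
def supNormB (w : Bs → ℝ) : ℝ := ⨆ x : Bs, |w x|

/-- The α-Hölder seminorm `|w|_α = sup_{x ≠ y} |w(x) − w(y)|/d(x,y)^α`. -/
def holderSemi (α : ℝ) (w : Bs → ℝ) : ℝ :=
  sSup {c : ℝ | ∃ x y, x ≠ y ∧ c = |w x - w y| / dB x y ^ α}

/-- The Hölder norm `‖w‖_α = ‖w‖_∞ + |w|_α`. -/
def holderNorm (α : ℝ) (w : Bs → ℝ) : ℝ := supNormB w + holderSemi α w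

instance : IsProbabilityMeasure haarC := by unfold haarC; infer_instance

instance : Nontrivial Circ :=
  ⟨⟨((2 * Real.pi / 2 : ℝ) : Circ), 0, fun h => by
    have := AddCircle.norm_half_period_eq (2 * Real.pi)
    rw [h, norm_zero, abs_of_pos Real.two_pi_pos] at this
    linarith [Real.pi_pos]⟩⟩

lemma dist_le_pi (a b : Circ) : dist a b ≤ Real.pi := by
  simpa [dist_eq_norm, abs_of_pos Real.two_pi_pos] using
    AddCircle.norm_le_half_period (2 * Real.pi) (x := a - b) Real.two_pi_pos.ne'

lemma summable_geometric_mul_pi : Summable fun k : ℕ => (1 / 2 : ℝ) ^ k * Real.pi :=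
  (summable_geometric_of_lt_one (by norm_num) (by norm_num)).mul_right _

lemma dB_term_le (x y : Bs) (k : ℕ) :
    (1 / 2 : ℝ) ^ k * dist (x k) (y k) ≤ (1 / 2) ^ k * Real.pi :=
  mul_le_mul_of_nonneg_left (dist_le_pi _ _) (by positivity)

lemma summable_dB (x y : Bs) : Summable fun k => (1 / 2 : ℝ) ^ k * dist (x k) (y k) :=
  summable_geometric_mul_pi.of_nonneg_of_le (fun _ => by positivity) (dB_term_le x y)

lemma dB_nonneg (x y : Bs) : 0 ≤ dB x y := tsum_nonneg fun _ => by positivity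

lemma dB_self (x : Bs) : dB x x = 0 := by simp [dB]

lemma dB_comm (x y : Bs) : dB x y = dB y x := by simp only [dB, dist_comm]

lemma dB_le (x y : Bs) : dB x y ≤ 2 * Real.pi :=
  calc dB x y ≤ ∑' k : ℕ, (1 / 2 : ℝ) ^ k * Real.pi :=
        (summable_dB x y).tsum_le_tsum (dB_term_le x y) summable_geometric_mul_pi
    _ = 2 * Real.pi := by rw [tsum_mul_right, tsum_geometric_two]

lemma dB_pos {x y : Bs} (h : x ≠ y) : 0 < dB x y := by
  obtain ⟨k, hk⟩ := Function.ne_iff.1 h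
  calc 0 < (1 / 2 : ℝ) ^ k * dist (x k) (y k) := by have := dist_pos.2 hk; positivity
    _ ≤ dB x y := (summable_dB x y).le_tsum k fun _ _ => by positivity

lemma dB_cons (a : Circ) (x y : Bs) : dB (cons a x) (cons a y) = 2⁻¹ * dB x y := by
  rw [dB, (summable_dB _ _).tsum_eq_zero_add, dB, ← tsum_mul_left]
  simp only [cons, pow_zero, one_mul, dist_self, zero_add, pow_succ]
  congr 1; ext k; ring

lemma continuous_dB : Continuous fun p : Bs × Bs => dB p.1 p.2 :=
  continuous_tsum (fun k => by fun_prop) summable_geometric_mul_pi fun k p => by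
    rw [Real.norm_of_nonneg (by positivity)]; exact dB_term_le p.1 p.2 k

def halfRpow (α : ℝ) : ℝ := (2⁻¹ : ℝ) ^ α

lemma halfRpow_pos (α : ℝ) : 0 < halfRpow α := Real.rpow_pos_of_pos (by norm_num) α

lemma halfRpow_lt_one {α : ℝ} (hα : 0 < α) : halfRpow α < 1 :=
  Real.rpow_lt_one (by norm_num) (by norm_num) hα

lemma rpow_dB_cons (α : ℝ) (a : Circ) (x y : Bs) :
    dB (cons a x) (cons a y) ^ α = halfRpow α * dB x y ^ α := by
  rw [dB_cons, Real.mul_rpow (by norm_num) (dB_nonneg x y), halfRpow]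

section Holder

variable {α K : ℝ} {v : Bs → ℝ}

lemma IsHolderB.nonneg (hv : IsHolderB α K v) : 0 ≤ K := by
  obtain ⟨x, y, hxy⟩ := exists_pair_ne Bs
  have hd := Real.rpow_pos_of_pos (dB_pos hxy) α
  exact nonneg_of_mul_nonneg_left ((abs_nonneg _).trans (hv x y)) hd

lemma IsHolderB.continuous (hα : 0 < α) (hv : IsHolderB α K v) : Continuous v := by
  refine continuous_iff_continuousAt.2 fun x => tendsto_iff_norm_sub_tendsto_zero.2 ?_
  have h : Continuous fun y => K * dB y x ^ α :=
    continuous_const.mul ((continuous_dB.comp (continuous_id.prodMk continuous_const)).rpow_const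
      fun _ => Or.inr hα.le)
  have h0 := h.tendsto x
  rw [dB_self, Real.zero_rpow hα.ne', mul_zero] at h0
  exact squeeze_zero (fun _ => norm_nonneg _) (fun y => hv y x) h0

lemma IsHolderB.mem_upperBounds (hv : IsHolderB α K v) :
    K ∈ upperBounds {c : ℝ | ∃ x y, x ≠ y ∧ c = |v x - v y| / dB x y ^ α} := by
  rintro _ ⟨x, y, hxy, rfl⟩
  exact (div_le_iff₀ (Real.rpow_pos_of_pos (dB_pos hxy) α)).2 (hv x y)

lemma holderSemi_nonneg (α : ℝ) (v : Bs → ℝ) : 0 ≤ holderSemi α v :=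
  Real.sSup_nonneg <| by
    rintro _ ⟨x, y, -, rfl⟩
    exact div_nonneg (abs_nonneg _) (Real.rpow_nonneg (dB_nonneg x y) α)

lemma holderSemi_le (hv : IsHolderB α K v) : holderSemi α v ≤ K :=
  Real.sSup_le hv.mem_upperBounds hv.nonneg

lemma isHolderB_holderSemi (hv : IsHolderB α K v) : IsHolderB α (holderSemi α v) v := by
  intro x y
  rcases eq_or_ne x y with rfl | hxy
  · simpa using mul_nonneg (holderSemi_nonneg α v) (Real.rpow_nonneg (dB_nonneg x x) α)
  · exact (div_le_iff₀ (Real.rpow_pos_of_pos (dB_pos hxy) α)).1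
      (le_csSup ⟨K, hv.mem_upperBounds⟩ ⟨x, y, hxy, rfl⟩)

end Holder

section Oscillation

variable {X : Type*} {v : X → ℝ}

def osc (v : X → ℝ) : ℝ := (⨆ x, v x) - ⨅ x, v x

lemma osc_le [Nonempty X] {O : ℝ} (h : ∀ x y, v x - v y ≤ O) : osc v ≤ O := by
  have : ⨆ x, v x ≤ (⨅ y, v y) + O := ciSup_le fun x => by
    linarith [le_ciInf fun y => (by linarith [h x y] : v x - O ≤ v y)]
  unfold osc; linarith

variable [TopologicalSpace X] [CompactSpace X]

lemma mem_Icc_iInf_add_osc (hv : Continuous v) (x : X) :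
    v x ∈ Set.Icc (⨅ y, v y) ((⨅ y, v y) + osc v) := by
  rw [osc, add_sub_cancel]
  exact ⟨ciInf_le (isCompact_range hv).bddBelow x, le_ciSup (isCompact_range hv).bddAbove x⟩

lemma osc_nonneg [Nonempty X] (hv : Continuous v) : 0 ≤ osc v := by
  obtain ⟨h₁, h₂⟩ := mem_Icc_iInf_add_osc hv (Classical.arbitrary X)
  linarith

lemma abs_le_osc_of_integral_eq_zero [MeasurableSpace X] [OpensMeasurableSpace X]
    {μ : Measure X} [IsProbabilityMeasure μ] (hv : Continuous v) (h0 : ∫ x, v x ∂μ = 0) (x : X) :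
    |v x| ≤ osc v := by
  have hint : Integrable v μ := hv.integrable_of_hasCompactSupport (.of_compactSpace v)
  have hlo : ⨅ y, v y ≤ 0 := by
    simpa [h0] using integral_mono (integrable_const _) hint fun y => (mem_Icc_iInf_add_osc hv y).1
  have hhi : 0 ≤ (⨅ y, v y) + osc v := by
    simpa [h0] using integral_mono hint (integrable_const _) fun y => (mem_Icc_iInf_add_osc hv y).2
  obtain ⟨h₁, h₂⟩ := mem_Icc_iInf_add_osc hv x
  exact abs_le.2 ⟨by linarith, by linarith⟩

end Oscillation

theorem integral_mul_sub_integral_mul_le {Ω : Type*} [MeasurableSpace Ω] {μ : Measure Ω}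
    {p₁ p₂ f₁ f₂ : Ω → ℝ} {β c O t : ℝ} (hp₁ : Integrable p₁ μ) (hp₂ : Integrable p₂ μ)
    (hp₁1 : ∫ a, p₁ a ∂μ = 1) (hp₂1 : ∫ a, p₂ a ∂μ = 1) (hp₁0 : ∀ a, 0 ≤ p₁ a) (hβ : 0 ≤ β)
    (hβp : ∀ a, β * p₁ a ≤ p₂ a) (hpf₁ : Integrable (fun a => p₁ a * f₁ a) μ)
    (hpf₂ : Integrable (fun a => p₂ a * f₂ a) μ) (hf₁ : ∀ a, f₁ a ≤ c + O) (hf₂ : ∀ a, c ≤ f₂ a)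
    (ht : ∀ a, f₁ a - f₂ a ≤ t) :
    ∫ a, p₁ a * f₁ a ∂μ - ∫ a, p₂ a * f₂ a ∂μ ≤ β * t + (1 - β) * O := by
  have hβ1 : β ≤ 1 := by
    simpa [integral_const_mul, hp₁1, hp₂1] using integral_mono (hp₁.const_mul β) hp₂ hβp
  -- `p₁ f₁ - p₂ f₂ = β p₁ (f₁ - f₂) + (1 - β) p₁ f₁ - (p₂ - β p₁) f₂`: on the common part `β p₁`
  -- only `f₁ - f₂` is seen
  have hpt : ∀ a, p₁ a * f₁ a - p₂ a * f₂ a ≤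
      (β * t + (1 - β) * (c + O)) * p₁ a - c * (p₂ a - β * p₁ a) := fun a => by
    have h₁ := mul_le_mul_of_nonneg_left (ht a) (mul_nonneg hβ (hp₁0 a))
    have h₂ := mul_le_mul_of_nonneg_left (hf₁ a) (mul_nonneg (sub_nonneg.2 hβ1) (hp₁0 a))
    have h₃ := mul_le_mul_of_nonneg_left (hf₂ a) (sub_nonneg.2 (hβp a))
    linarith
  have hrhs : Integrable (fun a => (β * t + (1 - β) * (c + O)) * p₁ a - c * (p₂ a - β * p₁ a)) μ :=
    (hp₁.const_mul _).sub ((hp₂.sub (hp₁.const_mul β)).const_mul c)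
  calc ∫ a, p₁ a * f₁ a ∂μ - ∫ a, p₂ a * f₂ a ∂μ = ∫ a, p₁ a * f₁ a - p₂ a * f₂ a ∂μ :=
        (integral_sub hpf₁ hpf₂).symm
    _ ≤ ∫ a, (β * t + (1 - β) * (c + O)) * p₁ a - c * (p₂ a - β * p₁ a) ∂μ :=
        integral_mono (hpf₁.sub hpf₂) hrhs hpt
    _ = β * t + (1 - β) * O := by
        rw [integral_sub (g := fun a => c * (p₂ a - β * p₁ a)) (hp₁.const_mul _)
            ((hp₂.sub (hp₁.const_mul β)).const_mul c),
          integral_const_mul, integral_const_mul,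
          integral_sub (g := fun a => β * p₁ a) hp₂ (hp₁.const_mul β), integral_const_mul, hp₁1, hp₂1]
        ring

section Ruelle

variable {α H : ℝ} {A v : Bs → ℝ}

lemma continuous_cons_uncurry : Continuous fun p : Circ × Bs => cons p.1 p.2 :=
  continuous_pi fun n => match n with
    | 0 => continuous_fst
    | k + 1 => (continuous_apply k).comp continuous_snd

lemma continuous_cons (x : Bs) : Continuous fun a : Circ => cons a x :=
  continuous_cons_uncurry.comp (continuous_id.prodMk continuous_const)

lemma integrable_haarC {f : Circ → ℝ} (hf : Continuous f) : Integrable f haarC :=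
  hf.integrable_of_hasCompactSupport (.of_compactSpace f)

lemma continuous_ruelle (hA : Continuous A) (hv : Continuous v) : Continuous (Ruelle A v) := by
  have hc := continuous_cons_uncurry.comp continuous_swap
  have h := continuous_parametric_integral_of_continuous (μ := haarC)
    (f := fun x a => Real.exp (A (cons a x)) * v (cons a x)) ((hA.comp hc).rexp.mul (hv.comp hc)) isCompact_univ
  rw [Measure.restrict_univ] at h
  exact h

lemma ruelle_mem_Icc (hA : Continuous A) (hnorm : NormalizedB A) (hv : Continuous v) {c d : ℝ}
    (h : ∀ z, v z ∈ Set.Icc c d) (x : Bs) : Ruelle A v x ∈ Set.Icc c d := by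
  have hp : Continuous fun a => Real.exp (A (cons a x)) := (hA.comp (continuous_cons x)).rexp
  have hpv := integrable_haarC (hp.mul (hv.comp (continuous_cons x)))
  have hmass : ∀ e, ∫ a, Real.exp (A (cons a x)) * e ∂haarC = e := fun e => by
    rw [integral_mul_const, hnorm x, one_mul]
  constructor
  · calc c = ∫ a, Real.exp (A (cons a x)) * c ∂haarC := (hmass c).symm
      _ ≤ Ruelle A v x := integral_mono ((integrable_haarC hp).mul_const c) hpv fun a =>
          mul_le_mul_of_nonneg_left (h _).1 (Real.exp_pos _).le
  · calc Ruelle A v x ≤ ∫ a, Real.exp (A (cons a x)) * d ∂haarC :=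
          integral_mono hpv ((integrable_haarC hp).mul_const d) fun a =>
            mul_le_mul_of_nonneg_left (h _).2 (Real.exp_pos _).le
      _ = d := hmass d

lemma continuous_iterate_ruelle (hA : Continuous A) (hv : Continuous v) (n : ℕ) :
    Continuous ((Ruelle A)^[n] v) :=
  Function.Iterate.rec _ hv (fun _ => continuous_ruelle hA) n

lemma iterate_ruelle_mem_Icc (hA : Continuous A) (hnorm : NormalizedB A) (hv : Continuous v)
    {c d : ℝ} (h : ∀ z, v z ∈ Set.Icc c d) (n : ℕ) (x : Bs) :
    (Ruelle A)^[n] v x ∈ Set.Icc c d :=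
  (Function.Iterate.rec (fun u => Continuous u ∧ ∀ z, u z ∈ Set.Icc c d) ⟨hv, h⟩
    (fun _ hu => ⟨continuous_ruelle hA hu.1, ruelle_mem_Icc hA hnorm hu.1 hu.2⟩) n).2 x

lemma integral_iterate_ruelle {m : Measure Bs} (hA : Continuous A) (hfix : FixedDual A m)
    (hv : Continuous v) (n : ℕ) : ∫ x, (Ruelle A)^[n] v x ∂m = ∫ x, v x ∂m := by
  induction n with
  | zero => rfl
  | succ n ih =>
    have hc := continuous_iterate_ruelle hA hv n
    obtain ⟨C, hC⟩ := (isCompact_range hc.abs).bddAbove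
    rw [Function.iterate_succ_apply', hfix _ hc ⟨C, fun x => hC ⟨x, rfl⟩⟩, ih]

lemma abs_ruelle_sub_le (hα : 0 < α) (hA : IsHolderB α H A) (hnorm : NormalizedB A)
    (hv : Continuous v) {c O t : ℝ} (hvc : ∀ z, v z ∈ Set.Icc c (c + O)) {x y : Bs}
    (ht : ∀ a, |v (cons a x) - v (cons a y)| ≤ t) :
    |Ruelle A v x - Ruelle A v y| ≤ Real.exp (-(H * (halfRpow α * dB x y ^ α))) * t +
      (1 - Real.exp (-(H * (halfRpow α * dB x y ^ α)))) * O := by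
  have hAc := hA.continuous hα
  have hp : ∀ z, Continuous fun a => Real.exp (A (cons a z)) := fun z =>
    (hAc.comp (continuous_cons z)).rexp
  have hpv : ∀ z, Continuous fun a => Real.exp (A (cons a z)) * v (cons a z) := fun z =>
    (hp z).mul (hv.comp (continuous_cons z))
  have hcoupling : ∀ x y, (∀ a, v (cons a x) - v (cons a y) ≤ t) →
      Ruelle A v x - Ruelle A v y ≤ Real.exp (-(H * (halfRpow α * dB x y ^ α))) * t +
        (1 - Real.exp (-(H * (halfRpow α * dB x y ^ α)))) * O := fun x y hxy =>
    integral_mul_sub_integral_mul_le (integrable_haarC (hp x)) (integrable_haarC (hp y))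
      (hnorm x) (hnorm y) (fun _ => (Real.exp_pos _).le) (Real.exp_pos _).le
      (fun a => by
        rw [← Real.exp_add, Real.exp_le_exp]
        have := (abs_le.1 (hA (cons a x) (cons a y))).2
        rw [rpow_dB_cons] at this
        linarith)
      (integrable_haarC (hpv x)) (integrable_haarC (hpv y)) (fun _ => (hvc _).2)
      (fun _ => (hvc _).1) hxy
  refine abs_sub_le_iff.2 ⟨hcoupling x y fun a => (le_abs_self _).trans (ht a), ?_⟩
  rw [dB_comm]
  exact hcoupling y x fun a => (le_abs_self _).trans ((abs_sub_comm _ _).trans_le (ht a))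

end Ruelle

-- `H (θ + θ² + ⋯)` with `θ = 2^{-α}`: the accumulated Hölder distortion of the weights `e^A`
-- along inverse branches
def distortion (α H : ℝ) : ℝ := halfRpow α * H / (1 - halfRpow α)

lemma distortion_nonneg {α H : ℝ} (hα : 0 < α) (hH : 0 ≤ H) : 0 ≤ distortion α H :=
  div_nonneg (mul_nonneg (halfRpow_pos α).le hH) (sub_nonneg.2 (halfRpow_lt_one hα).le)

lemma halfRpow_mul_add_distortion {α : ℝ} (hα : 0 < α) (H : ℝ) :
    halfRpow α * (H + distortion α H) = distortion α H := by
  have := (sub_pos.2 (halfRpow_lt_one hα)).ne'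
  unfold distortion
  field_simp
  ring

-- as `d^α ≤ (2π)^α`, the `n`-step weight distributions seen from any two points share at least
-- this much mass
def overlap (α H : ℝ) : ℝ := Real.exp (-(distortion α H * (2 * Real.pi) ^ α))

def oscHolderNorm (α β : ℝ) (v : Bs → ℝ) : ℝ := osc v + β * holderSemi α v

section Iterate

variable {α H K c O : ℝ} {A v : Bs → ℝ}

theorem abs_iterate_ruelle_sub_le (hα : 0 < α) (hA : IsHolderB α H A) (hnorm : NormalizedB A)
    (hv : IsHolderB α K v) (hvc : ∀ z, v z ∈ Set.Icc c (c + O)) (n : ℕ) (x y : Bs) :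
    |(Ruelle A)^[n] v x - (Ruelle A)^[n] v y| ≤
      halfRpow α ^ n * K * dB x y ^ α + (1 - Real.exp (-(distortion α H * dB x y ^ α))) * O := by
  have hO : 0 ≤ O := by linarith [(hvc x).1, (hvc x).2]
  have hH := hA.nonneg
  have hB := distortion_nonneg hα hH
  have hK := hv.nonneg
  have hθ := halfRpow_pos α
  induction n generalizing x y with
  | zero =>
    have hd := Real.rpow_nonneg (dB_nonneg x y) α
    have : Real.exp (-(distortion α H * dB x y ^ α)) ≤ 1 :=
      Real.exp_le_one_iff.2 (neg_nonpos.2 (by positivity))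
    simpa using (hv x y).trans (le_add_of_nonneg_right (mul_nonneg (sub_nonneg.2 this) hO))
  | succ n ih =>
    set d := dB x y ^ α
    have hd : 0 ≤ d := Real.rpow_nonneg (dB_nonneg x y) α
    set β := Real.exp (-(H * (halfRpow α * d)))
    set e := Real.exp (-(distortion α H * (halfRpow α * d)))
    have hβ1 : β ≤ 1 := Real.exp_le_one_iff.2 (neg_nonpos.2 (by positivity))
    have hβe : β * e = Real.exp (-(distortion α H * d)) := by
      rw [← Real.exp_add]
      congr 1
      linear_combination (-d) * halfRpow_mul_add_distortion hα H
    have hstep := abs_ruelle_sub_le hα hA hnorm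
      (continuous_iterate_ruelle (hA.continuous hα) (hv.continuous hα) n)
      (iterate_ruelle_mem_Icc (hA.continuous hα) hnorm (hv.continuous hα) hvc n)
      fun a => by simpa only [rpow_dB_cons] using ih (cons a x) (cons a y)
    rw [Function.iterate_succ_apply']
    have hX : 0 ≤ halfRpow α ^ (n + 1) * K * d := by positivity
    calc _ ≤ β * (halfRpow α ^ n * K * (halfRpow α * d) + (1 - e) * O) + (1 - β) * O := hstep
      _ = β * (halfRpow α ^ (n + 1) * K * d) + (1 - β * e) * O := by ring
      _ ≤ halfRpow α ^ (n + 1) * K * d + (1 - Real.exp (-(distortion α H * d))) * O := by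
        rw [hβe]; linarith [mul_le_of_le_one_left hX hβ1]

lemma isHolderB_iterate_ruelle (hα : 0 < α) (hA : IsHolderB α H A) (hnorm : NormalizedB A)
    (hv : IsHolderB α K v) (hvc : ∀ z, v z ∈ Set.Icc c (c + O)) (n : ℕ) :
    IsHolderB α (halfRpow α ^ n * K + distortion α H * O) ((Ruelle A)^[n] v) := fun x y => by
  have hO : 0 ≤ O := by linarith [(hvc x).1, (hvc x).2]
  calc _ ≤ _ := abs_iterate_ruelle_sub_le hα hA hnorm hv hvc n x y
    _ ≤ halfRpow α ^ n * K * dB x y ^ α + distortion α H * dB x y ^ α * O := by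
      gcongr
      linarith [Real.add_one_le_exp (-(distortion α H * dB x y ^ α))]
    _ = _ := by ring

lemma iterate_ruelle_sub_le (hα : 0 < α) (hA : IsHolderB α H A) (hnorm : NormalizedB A)
    (hv : IsHolderB α K v) (hvc : ∀ z, v z ∈ Set.Icc c (c + O)) (n : ℕ) (x y : Bs) :
    (Ruelle A)^[n] v x - (Ruelle A)^[n] v y ≤
      halfRpow α ^ n * K * (2 * Real.pi) ^ α + (1 - overlap α H) * O := by
  have hO : 0 ≤ O := by linarith [(hvc x).1, (hvc x).2]
  have hB := distortion_nonneg hα hA.nonneg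
  have hK := hv.nonneg
  have hθ := halfRpow_pos α
  have hd := Real.rpow_le_rpow (dB_nonneg x y) (dB_le x y) hα.le
  calc _ ≤ _ := le_abs_self _
    _ ≤ _ := abs_iterate_ruelle_sub_le hα hA hnorm hv hvc n x y
    _ ≤ _ := by unfold overlap; gcongr

theorem oscHolderNorm_iterate_ruelle_le (hα : 0 < α) (hA : IsHolderB α H A)
    (hnorm : NormalizedB A) (hv : IsHolderB α K v) {β ρ : ℝ} (hβ : 0 ≤ β)
    (hβB : β * distortion α H ≤ overlap α H / 2) (hρ : 1 - overlap α H / 2 ≤ ρ) {n : ℕ}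
    (hn : halfRpow α ^ n * ((2 * Real.pi) ^ α + β) ≤ ρ * β) :
    oscHolderNorm α β ((Ruelle A)^[n] v) ≤ ρ * oscHolderNorm α β v := by
  have hvc := mem_Icc_iInf_add_osc (hv.continuous hα)
  have hv' := isHolderB_holderSemi hv
  have hsemi := holderSemi_le (isHolderB_iterate_ruelle hα hA hnorm hv' hvc n)
  have hosc := osc_le (iterate_ruelle_sub_le hα hA hnorm hv' hvc n)
  have hO := osc_nonneg (hv.continuous hα)
  have hK := holderSemi_nonneg α v
  unfold oscHolderNorm
  linarith [mul_le_mul_of_nonneg_left hsemi hβ, mul_le_mul_of_nonneg_right hβB hO,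
    mul_le_mul_of_nonneg_right hρ hO, mul_le_mul_of_nonneg_right hn hK]

end Iterate

theorem le_geometric_of_block {u : ℕ → ℝ} {n₀ : ℕ} {ρ M : ℝ} (hn₀ : n₀ ≠ 0) (hρ0 : 0 < ρ)
    (hρ1 : ρ ≤ 1) (hM : 0 ≤ M) (hu0 : 0 ≤ u 0) (hblock : ∀ n, u (n + n₀) ≤ ρ * u n)
    (hrem : ∀ n k, k < n₀ → u (n + k) ≤ M * u n) (n : ℕ) :
    u n ≤ M / ρ * (ρ ^ (n₀⁻¹ : ℝ)) ^ n * u 0 := by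
  have hblocks : ∀ j, u (j * n₀) ≤ ρ ^ j * u 0 := by
    intro j
    induction j with
    | zero => simp
    | succ j ih =>
      calc u ((j + 1) * n₀) = u (j * n₀ + n₀) := by rw [add_mul, one_mul]
        _ ≤ ρ * u (j * n₀) := hblock _
        _ ≤ ρ * (ρ ^ j * u 0) := by gcongr
        _ = ρ ^ (j + 1) * u 0 := by ring
  set r := ρ ^ (n₀⁻¹ : ℝ)
  have hr0 : 0 ≤ r := Real.rpow_nonneg hρ0.le _
  have hr1 : r ≤ 1 := Real.rpow_le_one hρ0.le hρ1 (by positivity)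
  have hpow : ρ ^ (n / n₀) ≤ r ^ n / ρ := by
    rw [le_div_iff₀ hρ0, ← pow_succ, ← Real.rpow_inv_natCast_pow hρ0.le hn₀, ← pow_mul]
    exact pow_le_pow_of_le_one hr0 hr1 (Nat.lt_mul_div_succ n (Nat.pos_of_ne_zero hn₀)).le
  calc u n = u (n / n₀ * n₀ + n % n₀) := by rw [Nat.div_add_mod']
    _ ≤ M * u (n / n₀ * n₀) := hrem _ _ (Nat.mod_lt _ (Nat.pos_of_ne_zero hn₀))
    _ ≤ M * (ρ ^ (n / n₀) * u 0) := by gcongr; exact hblocks _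
    _ ≤ M * (r ^ n / ρ * u 0) := by gcongr
    _ = M / ρ * r ^ n * u 0 := by ring

section Norms

variable {α β : ℝ} {v : Bs → ℝ}

lemma oscHolderNorm_nonneg (hv : Continuous v) (hβ : 0 ≤ β) : 0 ≤ oscHolderNorm α β v :=
  add_nonneg (osc_nonneg hv) (mul_nonneg hβ (holderSemi_nonneg α v))

lemma oscHolderNorm_le_two_mul_holderNorm (hv : Continuous v) (hβ : β ≤ 2) :
    oscHolderNorm α β v ≤ 2 * holderNorm α v := by
  have habs : ∀ x, |v x| ≤ supNormB v := le_ciSup (isCompact_range hv.abs).bddAbove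
  have hosc : osc v ≤ 2 * supNormB v := osc_le fun x y => by
    linarith [abs_le.1 (habs x), abs_le.1 (habs y)]
  have := mul_le_mul_of_nonneg_right hβ (holderSemi_nonneg α v)
  unfold oscHolderNorm holderNorm
  linarith

lemma holderNorm_le_oscHolderNorm_div {m : Measure Bs} [IsProbabilityMeasure m]
    (hv : Continuous v) (h0 : ∫ x, v x ∂m = 0) (hβ0 : 0 < β) (hβ1 : β ≤ 1) :
    holderNorm α v ≤ oscHolderNorm α β v / β := by
  have hsup : supNormB v ≤ osc v := ciSup_le (abs_le_osc_of_integral_eq_zero hv h0)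
  have hosc : osc v ≤ osc v / β := le_div_self (osc_nonneg hv) hβ0 hβ1
  rw [oscHolderNorm, add_div, mul_div_cancel_left₀ _ hβ0.ne', holderNorm]
  linarith

end Norms

theorem exists_ruelle_contraction {α H : ℝ} {A : Bs → ℝ} (hα : 0 < α) (hA : IsHolderB α H A)
    (hnorm : NormalizedB A) :
    ∃ β ρ M : ℝ, ∃ n₀ : ℕ, 0 < β ∧ β ≤ 1 ∧ 0 < ρ ∧ ρ < 1 ∧ 0 < M ∧ n₀ ≠ 0 ∧
      ∀ K v, IsHolderB α K v → ∀ n,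
        oscHolderNorm α β ((Ruelle A)^[n + n₀] v) ≤ ρ * oscHolderNorm α β ((Ruelle A)^[n] v) ∧
        ∀ k, oscHolderNorm α β ((Ruelle A)^[n + k] v) ≤ M * oscHolderNorm α β ((Ruelle A)^[n] v) := by
  set B := distortion α H
  set D := (2 * Real.pi) ^ α
  set δ := overlap α H
  have hB : 0 ≤ B := distortion_nonneg hα hA.nonneg
  have hD : 0 < D := Real.rpow_pos_of_pos Real.two_pi_pos α
  have hδ0 : 0 < δ := Real.exp_pos _
  have hδ1 : δ ≤ 1 := Real.exp_le_one_iff.2 (neg_nonpos.2 (by positivity))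
  set β := δ / (2 * (B + 1))
  have hβ0 : 0 < β := by positivity
  have hβB : β * B ≤ δ / 2 := by
    rw [div_mul_eq_mul_div, div_le_div_iff₀ (by positivity) (by norm_num)]
    nlinarith
  have hβ1 : β ≤ 1 := (div_le_one (by positivity)).2 (by linarith)
  have hρ0 : 0 < 1 - δ / 2 := by linarith
  have hθ := halfRpow_pos α
  have hθ1 := halfRpow_lt_one hα
  obtain ⟨n₀, hn₀⟩ := exists_pow_lt_of_lt_one (div_pos (mul_pos hρ0 hβ0) (add_pos hD hβ0)) hθ1
  have hblock : halfRpow α ^ (n₀ + 1) * (D + β) ≤ (1 - δ / 2) * β := by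
    rw [← le_div_iff₀ (by positivity)]
    exact (pow_le_pow_of_le_one hθ.le hθ1.le n₀.le_succ).trans hn₀.le
  have hM : 1 - δ / 2 ≤ (D + β) / β := by
    linarith [(one_le_div hβ0).2 (by linarith : β ≤ D + β)]
  refine ⟨β, 1 - δ / 2, (D + β) / β, n₀ + 1, hβ0, hβ1, hρ0, by linarith, by positivity, by omega,
    fun K v hv n => ?_⟩
  obtain ⟨K', hv'⟩ : ∃ K', IsHolderB α K' ((Ruelle A)^[n] v) :=
    ⟨_, isHolderB_iterate_ruelle hα hA hnorm hv (mem_Icc_iInf_add_osc (hv.continuous hα)) n⟩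
  refine ⟨?_, fun k => ?_⟩ <;> rw [add_comm, Function.iterate_add_apply]
  · exact oscHolderNorm_iterate_ruelle_le hα hA hnorm hv' hβ0.le hβB le_rfl hblock
  · refine oscHolderNorm_iterate_ruelle_le hα hA hnorm hv' hβ0.le hβB hM ?_
    rw [div_mul_cancel₀ _ hβ0.ne']
    exact mul_le_of_le_one_left (by positivity) (pow_le_one₀ hθ.le hθ1.le)

theorem spectral_gap_general (α H : ℝ) (hα0 : 0 < α)
    (A : Bs → ℝ) (hA : IsHolderB α H A) (hnorm : NormalizedB A)
    (m : Measure Bs) (hm : IsProbabilityMeasure m) (hfix : FixedDual A m) :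
    ∃ C : ℝ, 0 < C ∧ ∃ r : ℝ, 0 < r ∧ r < 1 ∧
      ∀ w : Bs → ℝ, (∃ Hw, IsHolderB α Hw w) → ∫ x, w x ∂m = 0 →
        ∀ n : ℕ, 1 ≤ n →
          holderNorm α ((Ruelle A)^[n] w) ≤ C * r ^ n * holderNorm α w := by
  obtain ⟨β, ρ, M, n₀, hβ0, hβ1, hρ0, hρ1, hM, hn₀, hcontr⟩ := exists_ruelle_contraction hα0 hA hnorm
  refine ⟨2 * M / (ρ * β), by positivity, ρ ^ (n₀⁻¹ : ℝ), Real.rpow_pos_of_pos hρ0 _,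
    Real.rpow_lt_one hρ0.le hρ1 (by positivity), ?_⟩
  rintro w ⟨K, hw⟩ hw0 n -
  have hAc := hA.continuous hα0
  have hwc := hw.continuous hα0
  have hmean : ∫ x, (Ruelle A)^[n] w x ∂m = 0 := by rw [integral_iterate_ruelle hAc hfix hwc, hw0]
  have hgeom := le_geometric_of_block (u := fun k => oscHolderNorm α β ((Ruelle A)^[k] w)) hn₀ hρ0
    hρ1.le hM.le (oscHolderNorm_nonneg hwc hβ0.le) (fun k => (hcontr K w hw k).1)
    (fun k j _ => (hcontr K w hw k).2 j) n
  calc holderNorm α ((Ruelle A)^[n] w) ≤ oscHolderNorm α β ((Ruelle A)^[n] w) / β :=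
        holderNorm_le_oscHolderNorm_div (continuous_iterate_ruelle hAc hwc n) hmean hβ0 hβ1
    _ ≤ M / ρ * (ρ ^ (n₀⁻¹ : ℝ)) ^ n * oscHolderNorm α β w / β := by gcongr; exact hgeom
    _ ≤ M / ρ * (ρ ^ (n₀⁻¹ : ℝ)) ^ n * (2 * holderNorm α w) / β := by
        gcongr; exact oscHolderNorm_le_two_mul_holderNorm hwc (by linarith)
    _ = 2 * M / (ρ * β) * (ρ ^ (n₀⁻¹ : ℝ)) ^ n * holderNorm α w := by field_simp

/-- spectral gap of the normalized Ruelle operator on the space of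
α-Hölder functions of `m`-integral zero. -/
theorem spectral_gap (α H : ℝ) (hα0 : 0 < α) (hα1 : α ≤ 1)
    (A : Bs → ℝ) (hA : IsHolderB α H A) (hnorm : NormalizedB A)
    (m : Measure Bs) (hm : IsProbabilityMeasure m) (hfix : FixedDual A m)
    (hmuniq : ∀ m' : Measure Bs, IsProbabilityMeasure m' → FixedDual A m' → m' = m) :
    ∃ C : ℝ, 0 < C ∧ ∃ r : ℝ, 0 < r ∧ r < 1 ∧
      ∀ w : Bs → ℝ, (∃ Hw, IsHolderB α Hw w) → ∫ x, w x ∂m = 0 →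
        ∀ n : ℕ, 1 ≤ n →
          holderNorm α ((Ruelle A)^[n] w) ≤ C * r ^ n * holderNorm α w :=
  spectral_gap_general α H hα0 A hA hnorm m hm hfix
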